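/- Let Z be an N×k real matrix with ZᵀZ nonsingular, y an N×1 vector, and λ_R, λ_D > 0. Define A_h = λ_R ZᵀZ + λ_D I_k and h(λ) = λ_R² yᵀZ A_h⁻¹ ZᵀZ A_h⁻¹ Zᵀy + λ_R² yᵀZ A_h⁻² Zᵀy − 2λ_R yᵀZ A_h⁻¹ Zᵀy. Then h(λ) ≤ yᵀZ (ZᵀZ)⁻² Zᵀ y. -/

import Mathlib

/-! With `v = Zᵀ y`, `P = A_h⁻¹` and `Q = (ZᵀZ)⁻¹`, the left-hand side is the quadratic form in `v`
of `λ_R² P (ZᵀZ) P + λ_R² P² − 2 λ_R P = (λ_R² − λ_R λ_D) P² − λ_R P`, which lies below `λ_R² P²`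
in the Loewner order. Since `Q − λ_R P = λ_D Q P`, the difference
`Q² − λ_R² P² = λ_D Q P Q + λ_R λ_D P Q P` is positive semidefinite. -/

open Matrix

open scoped MatrixOrder ComplexOrder

variable {m n : Type*}

theorem dotProduct_mul_mul_transpose_mulVec {R : Type*} [CommSemiring R] [Fintype m] [Fintype n]
    (Z : Matrix m n R) (M : Matrix n n R) (y : m → R) :
    y ⬝ᵥ (Z * M * Zᵀ) *ᵥ y = (Zᵀ *ᵥ y) ⬝ᵥ M *ᵥ (Zᵀ *ᵥ y) := by
  rw [← mulVec_mulVec, ← mulVec_mulVec, dotProduct_mulVec, ← mulVec_transpose]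

theorem dotProduct_mulVec_le_of_le {𝕜 : Type*} [RCLike 𝕜] [Fintype n] {M N : Matrix n n 𝕜}
    (h : M ≤ N) (x : n → 𝕜) : star x ⬝ᵥ M *ᵥ x ≤ star x ⬝ᵥ N *ᵥ x := by
  rw [← sub_nonneg, ← dotProduct_sub, ← sub_mulVec]
  exact (le_iff.mp h).dotProduct_mulVec_nonneg x

section Resolvent

variable [Fintype n] [DecidableEq n] {K : Type*} [Field K] {B : Matrix n n K} {r d : K}

theorem smul_inv_mul_mul_inv (hA : IsUnit (r • B + d • 1).det) :
    r • ((r • B + d • 1)⁻¹ * B * (r • B + d • 1)⁻¹)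
      = (r • B + d • 1)⁻¹ - d • ((r • B + d • 1)⁻¹ * (r • B + d • 1)⁻¹) := by
  set A := r • B + d • 1
  calc r • (A⁻¹ * B * A⁻¹) = A⁻¹ * (A - d • 1) * A⁻¹ := by
        rw [show A - d • 1 = r • B by simp [A], Matrix.mul_smul, Matrix.smul_mul]
    _ = A⁻¹ - d • (A⁻¹ * A⁻¹) := by
        rw [Matrix.mul_sub, Matrix.sub_mul, nonsing_inv_mul A hA, Matrix.one_mul,
          Matrix.mul_smul, Matrix.smul_mul, Matrix.mul_one]

theorem inv_sub_smul_inv_smul_add_smul_one (hB : IsUnit B.det) (hA : IsUnit (r • B + d • 1).det) :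
    B⁻¹ - r • (r • B + d • 1)⁻¹ = d • (B⁻¹ * (r • B + d • 1)⁻¹) := by
  set A := r • B + d • 1
  have hBA : B⁻¹ * A = r • 1 + d • B⁻¹ := by
    simp [A, Matrix.mul_add, nonsing_inv_mul B hB]
  calc B⁻¹ - r • A⁻¹ = B⁻¹ * A * A⁻¹ - r • A⁻¹ := by
        rw [Matrix.mul_assoc, mul_nonsing_inv A hA, Matrix.mul_one]
    _ = d • (B⁻¹ * A⁻¹) := by
        rw [hBA, Matrix.add_mul, Matrix.smul_mul, Matrix.smul_mul, Matrix.one_mul,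
          add_sub_cancel_left]

theorem inv_mul_inv_sub_sq_smul_inv_mul_inv (hB : IsUnit B.det) (hA : IsUnit (r • B + d • 1).det) :
    B⁻¹ * B⁻¹ - r ^ 2 • ((r • B + d • 1)⁻¹ * (r • B + d • 1)⁻¹)
      = d • (B⁻¹ * (r • B + d • 1)⁻¹ * B⁻¹)
        + (r * d) • ((r • B + d • 1)⁻¹ * B⁻¹ * (r • B + d • 1)⁻¹) := by
  set P := (r • B + d • 1)⁻¹
  calc B⁻¹ * B⁻¹ - r ^ 2 • (P * P) = (B⁻¹ - r • P) * B⁻¹ + r • (P * (B⁻¹ - r • P)) := by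
        simp only [Matrix.sub_mul, Matrix.mul_sub, Matrix.smul_mul, Matrix.mul_smul, smul_sub,
          smul_smul, sq]
        abel
    _ = _ := by
        rw [inv_sub_smul_inv_smul_add_smul_one hB hA, Matrix.smul_mul, Matrix.mul_smul, smul_smul,
          Matrix.mul_assoc P]

end Resolvent

section Loewner

variable [DecidableEq n] {B : Matrix n n ℝ} {r d : ℝ}

theorem posDef_smul_add_smul_one (hB : B.PosSemidef) (hr : 0 ≤ r) (hd : 0 < d) :
    (r • B + d • 1).PosDef :=
  PosDef.posSemidef_add (hB.smul hr) (PosDef.one.smul hd)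

variable [Fintype n]

theorem sq_smul_inv_mul_inv_le_inv_mul_inv (hB : B.PosDef) (hr : 0 ≤ r) (hd : 0 < d) :
    r ^ 2 • ((r • B + d • 1)⁻¹ * (r • B + d • 1)⁻¹) ≤ B⁻¹ * B⁻¹ := by
  have hA := posDef_smul_add_smul_one hB.posSemidef hr hd
  rw [le_iff, inv_mul_inv_sub_sq_smul_inv_mul_inv hB.det_pos.ne'.isUnit hA.det_pos.ne'.isUnit]
  refine .add (.smul ?_ hd.le) (.smul ?_ (mul_nonneg hr hd.le))
  · have h := hA.inv.posSemidef.conjTranspose_mul_mul_same B⁻¹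
    rwa [hB.inv.isHermitian.eq] at h
  · have h := hB.inv.posSemidef.conjTranspose_mul_mul_same (r • B + d • 1)⁻¹
    rwa [hA.inv.isHermitian.eq] at h

theorem sq_smul_inv_mul_mul_inv_add_sub_le (hB : B.PosDef) (hr : 0 ≤ r) (hd : 0 < d) :
    r ^ 2 • ((r • B + d • 1)⁻¹ * B * (r • B + d • 1)⁻¹)
      + r ^ 2 • ((r • B + d • 1)⁻¹ * (r • B + d • 1)⁻¹) - (2 * r) • (r • B + d • 1)⁻¹
      ≤ B⁻¹ * B⁻¹ := by
  have hA := posDef_smul_add_smul_one hB.posSemidef hr hd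
  set P := (r • B + d • 1)⁻¹
  have hPBP : r ^ 2 • (P * B * P) = r • P - (r * d) • (P * P) := by
    rw [sq, mul_smul, smul_inv_mul_mul_inv hA.det_pos.ne'.isUnit, smul_sub, smul_smul]
  have hPP : (P * P).PosSemidef := by
    have h := posSemidef_conjTranspose_mul_self P
    rwa [hA.inv.isHermitian.eq] at h
  calc _ = r ^ 2 • (P * P) - ((r * d) • (P * P) + r • P) := by
        rw [hPBP]
        module
    _ ≤ r ^ 2 • (P * P) :=
        sub_le_self _ ((hPP.smul (mul_nonneg hr hd.le)).add (hA.inv.posSemidef.smul hr)).nonneg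
    _ ≤ B⁻¹ * B⁻¹ := sq_smul_inv_mul_inv_le_inv_mul_inv hB hr hd

end Loewner

theorem h_le_bound {N k : ℕ} (Z : Matrix (Fin N) (Fin k) ℝ) (y : Fin N → ℝ)
    (lR lD : ℝ) (hlR : 0 < lR) (hlD : 0 < lD) (hZ : IsUnit (Zᵀ * Z).det) :
    lR ^ 2 * (y ⬝ᵥ (Z * (lR • (Zᵀ * Z) + lD • 1)⁻¹ * (Zᵀ * Z) * (lR • (Zᵀ * Z) + lD • 1)⁻¹ * Zᵀ).mulVec y)
      + lR ^ 2 * (y ⬝ᵥ (Z * ((lR • (Zᵀ * Z) + lD • 1)⁻¹ * (lR • (Zᵀ * Z) + lD • 1)⁻¹) * Zᵀ).mulVec y)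
      - 2 * lR * (y ⬝ᵥ (Z * (lR • (Zᵀ * Z) + lD • 1)⁻¹ * Zᵀ).mulVec y)
      ≤ y ⬝ᵥ (Z * ((Zᵀ * Z)⁻¹ * (Zᵀ * Z)⁻¹) * Zᵀ).mulVec y := by
  have hB : (Zᵀ * Z).PosDef := by
    rw [← conjTranspose_eq_transpose_of_trivial] at hZ ⊢
    exact (posSemidef_conjTranspose_mul_self Z).posDef_iff_isUnit.mpr
      ((isUnit_iff_isUnit_det _).mpr hZ)
  set B := Zᵀ * Z
  set P := (lR • B + lD • 1)⁻¹
  have hq := dotProduct_mulVec_le_of_le (sq_smul_inv_mul_mul_inv_add_sub_le hB hlR.le hlD)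
    (Zᵀ *ᵥ y)
  simp only [star_trivial, add_mulVec, sub_mulVec, smul_mulVec, dotProduct_add, dotProduct_sub,
    dotProduct_smul, smul_eq_mul] at hq
  rw [show Z * P * B * P * Zᵀ = Z * (P * B * P) * Zᵀ by simp only [Matrix.mul_assoc]]
  simpa only [dotProduct_mul_mul_transpose_mulVec] using hq
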